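/- For every integer m ≥ 2, the formal power series G_m satisfies G_m · (1 − t·H_{m−2}) = t · G_{m−1} in ℤ⟦t⟧; equivalently, G_m = t·G_{m−1} + t·H_{m−2}·G_m. -/

import Mathlib

/-- A Catalan word: a word of positive integers starting with 1 in which each
letter exceeds its predecessor by at most 1. -/
def IsCatalanWord {n : ℕ} (w : Fin n → ℕ) : Prop :=
  (∀ i, 1 ≤ w i) ∧ (∀ h : 0 < n, w ⟨0, h⟩ = 1) ∧
  ∀ i : ℕ, ∀ h : i + 1 < n, w ⟨i + 1, h⟩ ≤ w ⟨i, by omega⟩ + 1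

/-- `H m` is the formal power series in `ℤ⟦t⟧` whose coefficient of `t^n` (for
`n ≥ 1`) is the number of words `w₁ ⋯ wₙ` with letters in `{1, …, m}` satisfying
`w_{i+1} ≤ w_i + 1` and `w_{i+1} ≠ w_i`, ending with `wₙ = m`; its constant
coefficient is `0`, and `H 0 = 0`. -/
noncomputable def H (m : ℕ) : PowerSeries ℤ :=
  PowerSeries.mk fun n =>
    (Set.ncard {w : Fin n → ℕ |
      (∀ i, 1 ≤ w i ∧ w i ≤ m) ∧
      (∀ i : ℕ, ∀ h : i + 1 < n,
        w ⟨i + 1, h⟩ ≤ w ⟨i, by omega⟩ + 1 ∧ w ⟨i + 1, h⟩ ≠ w ⟨i, by omega⟩) ∧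
      ∃ h : 0 < n, w ⟨n - 1, by omega⟩ = m} : ℤ)

/-- For `m ≥ 2`, `G m` is the formal power series in `ℤ⟦t⟧` whose coefficient of
`t^n` (for `n ≥ 1`) is the number of Catalan words of length `n` with no two
equal adjacent letters whose largest letter is `m - 1` and whose last letter is
`m - 1` (constant coefficient `0`); `G 1 = 1`. -/
noncomputable def G (m : ℕ) : PowerSeries ℤ :=
  if m = 1 then 1 else
  PowerSeries.mk fun n =>
    (Set.ncard {w : Fin n → ℕ | IsCatalanWord w ∧
      (∀ i : ℕ, ∀ h : i + 1 < n, w ⟨i + 1, h⟩ ≠ w ⟨i, by omega⟩) ∧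
      (∀ i, w i ≤ m - 1) ∧ (∃ i, w i = m - 1) ∧
      ∃ h : 0 < n, w ⟨n - 1, by omega⟩ = m - 1} : ℤ)

/-!
Read words as lists and count them by length: under this generating function a disjoint
union of languages becomes a sum and an unambiguous concatenation a product. A word counted
by `G (K + 2)` ends with its largest letter `K + 1`. With that last letter removed, the word
either avoids `K + 1`, and is then counted by `G (K + 1)`, or it splits after its last
`K + 1` into a word counted by `G (K + 2)` followed by a word over `{1, …, K}` ending in `K`,
counted by `H K`. Hence `G (K + 2) = t (G (K + 1) + G (K + 2) H K)`.
-/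

namespace List

variable {α : Type*}

theorem getLast?_ofFn_eq_some {n : ℕ} {w : Fin n → α} {a : α} :
    (ofFn w).getLast? = some a ↔ ∃ h : 0 < n, w ⟨n - 1, by omega⟩ = a := by
  rw [getLast?_eq_getElem?, List.getElem?_ofFn, length_ofFn]
  by_cases hn : 0 < n
  · simp [hn, Nat.sub_lt hn Nat.one_pos]
  · simp [hn, show ¬ n - 1 < n by omega]

theorem head?_ofFn_eq_some {n : ℕ} {w : Fin n → α} {a : α} :
    (ofFn w).head? = some a ↔ ∃ h : 0 < n, w ⟨0, h⟩ = a := by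
  rw [head?_eq_getElem?, List.getElem?_ofFn]
  by_cases hn : 0 < n <;> simp [hn]

theorem getLast?_cons_eq_some_iff_of_ne {a b : α} {l : List α} (h : a ≠ b) :
    (a :: l).getLast? = some b ↔ l.getLast? = some b := by
  rw [getLast?_cons]
  cases l.getLast? <;> simp [h]

theorem exists_eq_append_cons_notMem_right {a : α} {l : List α} (h : a ∈ l) :
    ∃ s t, l = s ++ a :: t ∧ a ∉ t := by
  obtain ⟨t, s, hl, ht⟩ := eq_append_cons_of_mem (mem_reverse.2 h)
  exact ⟨s.reverse, t.reverse, by simpa using congrArg reverse hl, by simpa using ht⟩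

theorem append_inj_left_of_getLast?_eq {c : α} {a a' b b' : List α}
    (ha : a.getLast? = some c) (ha' : a'.getLast? = some c) (hb : c ∉ b) (hb' : c ∉ b')
    (h : a ++ b = a' ++ b') : a = a' := by
  have no_overlap : ∀ {a b t : List α}, (a ++ t).getLast? = some c → c ∉ t ++ b → t = [] :=
    fun {a b t} hat htb => by
      by_contra ht
      rw [getLast?_append_of_ne_nil _ ht] at hat
      exact htb (mem_append_left _ (mem_of_getLast? hat))
  rcases append_eq_append_iff.1 h with ⟨t, rfl, rfl⟩ | ⟨t, rfl, rfl⟩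
  · rw [no_overlap ha' hb, append_nil]
  · rw [no_overlap ha hb', append_nil]

theorem finite_length_eq_forall_le (M n : ℕ) :
    {x : List ℕ | x.length = n ∧ ∀ a ∈ x, a ≤ M}.Finite := by
  induction n with
  | zero => exact (Set.finite_singleton []).subset fun x hx => eq_nil_of_length_eq_zero hx.1
  | succ n ih =>
    refine ((Set.finite_Iic M).image2 cons ih).subset ?_
    rintro (_ | ⟨a, x⟩) ⟨hlen, hx⟩
    · simp at hlen
    · exact ⟨a, hx a (by simp), x, ⟨by simpa using hlen, fun b hb => hx b (by simp [hb])⟩, rfl⟩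

end List

open PowerSeries Finset.HasAntidiagonal

namespace Language

variable {α : Type*}

theorem mem_singleton {x y : List α} : y ∈ ({x} : Language α) ↔ y = x := Iff.rfl

def slice (l : Language α) (n : ℕ) : Set (List α) := {x | x ∈ l ∧ x.length = n}

def HasFiniteSlices (l : Language α) : Prop := ∀ n, (l.slice n).Finite

noncomputable def lengthGF (l : Language α) : PowerSeries ℤ :=
  PowerSeries.mk fun n => ((l.slice n).ncard : ℤ)

theorem coeff_lengthGF (l : Language α) (n : ℕ) :
    coeff n (lengthGF l) = (l.slice n).ncard := coeff_mk _ _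

theorem ncard_setOf_ofFn_mem (l : Language α) (n : ℕ) :
    {w : Fin n → α | List.ofFn w ∈ l}.ncard = (l.slice n).ncard := by
  rw [← Set.ncard_image_of_injective _ List.ofFn_injective]
  congr 1
  ext x
  constructor
  · rintro ⟨w, hw, rfl⟩
    exact ⟨hw, List.length_ofFn⟩
  · rintro ⟨hx, rfl⟩
    exact ⟨fun i => x[i], by simpa [List.ofFn_getElem] using hx, List.ofFn_getElem⟩

theorem hasFiniteSlices_of_forall_le {l : Language ℕ} {M : ℕ} (h : ∀ x ∈ l, ∀ a ∈ x, a ≤ M) :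
    l.HasFiniteSlices := fun n =>
  (List.finite_length_eq_forall_le M n).subset fun x hx => ⟨hx.2, h x hx.1⟩

theorem hasFiniteSlices_singleton (x : List α) : ({x} : Language α).HasFiniteSlices :=
  fun _ => (Set.finite_singleton x).subset fun _ hy => hy.1

theorem lengthGF_singleton (x : List α) : lengthGF {x} = X ^ x.length := by
  ext n
  have hslice : ({x} : Language α).slice n = if n = x.length then {x} else ∅ := by
    ext y
    simp only [slice, mem_singleton, Set.mem_ofPred_eq]
    split_ifs with h
    · simp only [Set.mem_singleton_iff, and_iff_left_iff_imp]
      rintro rfl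
      exact h.symm
    · simp only [Set.mem_empty_iff_false, iff_false, not_and]
      rintro rfl
      exact Ne.symm h
  rw [coeff_lengthGF, coeff_X_pow, hslice]
  split_ifs <;> simp

theorem slice_add (l m : Language α) (n : ℕ) : (l + m).slice n = l.slice n ∪ m.slice n := by
  ext x
  simp only [slice, mem_add, Set.mem_ofPred_eq, Set.mem_union, or_and_right]

theorem slice_mul (l m : Language α) (n : ℕ) :
    (l * m).slice n = (fun p : List α × List α => p.1 ++ p.2) ''
      ⋃ p ∈ (antidiagonal n : Set (ℕ × ℕ)), l.slice p.1 ×ˢ m.slice p.2 := by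
  ext x
  simp only [slice, mem_mul, Set.mem_ofPred_eq, Set.mem_image, Set.mem_iUnion,
    Set.mem_prod, Finset.mem_coe, mem_antidiagonal, Prod.exists]
  constructor
  · rintro ⟨⟨a, ha, b, hb, rfl⟩, rfl⟩
    exact ⟨a, b, ⟨a.length, b.length, by simp, ⟨ha, rfl⟩, ⟨hb, rfl⟩⟩, rfl⟩
  · rintro ⟨a, b, ⟨i, j, hij, ⟨ha, rfl⟩, ⟨hb, rfl⟩⟩, rfl⟩
    exact ⟨⟨a, ha, b, hb, rfl⟩, by simpa using hij⟩

theorem HasFiniteSlices.add {l m : Language α} (hl : l.HasFiniteSlices)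
    (hm : m.HasFiniteSlices) : (l + m).HasFiniteSlices := fun n => by
  rw [slice_add]
  exact (hl n).union (hm n)

theorem HasFiniteSlices.mul {l m : Language α} (hl : l.HasFiniteSlices)
    (hm : m.HasFiniteSlices) : (l * m).HasFiniteSlices := fun n => by
  rw [slice_mul]
  exact ((antidiagonal n).finite_toSet.biUnion fun p _ => (hl p.1).prod (hm p.2)).image _

theorem lengthGF_add {l m : Language α} (hl : l.HasFiniteSlices) (hm : m.HasFiniteSlices)
    (hlm : Disjoint l m) : lengthGF (l + m) = lengthGF l + lengthGF m := by
  ext n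
  have hdisj : Disjoint (l.slice n) (m.slice n) :=
    Set.disjoint_left.2 fun x hxl hxm => Set.disjoint_left.1 hlm hxl.1 hxm.1
  rw [map_add, coeff_lengthGF, coeff_lengthGF, coeff_lengthGF, slice_add,
    Set.ncard_union_eq hdisj (hl n) (hm n), Nat.cast_add]

theorem lengthGF_mul {l m : Language α} (hl : l.HasFiniteSlices) (hm : m.HasFiniteSlices)
    (hlm : ∀ a ∈ l, ∀ b ∈ m, ∀ a' ∈ l, ∀ b' ∈ m, a ++ b = a' ++ b' → a = a') :
    lengthGF (l * m) = lengthGF l * lengthGF m := by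
  ext n
  have hinj : Set.InjOn (fun p : List α × List α => p.1 ++ p.2)
      (⋃ p ∈ (antidiagonal n : Set (ℕ × ℕ)), l.slice p.1 ×ˢ m.slice p.2) := by
    rintro ⟨a, b⟩ hab ⟨a', b'⟩ hab' h
    simp only [Set.mem_iUnion, Set.mem_prod] at hab hab'
    obtain ⟨_, _, ⟨ha, -⟩, hb, -⟩ := hab
    obtain ⟨_, _, ⟨ha', -⟩, hb', -⟩ := hab'
    obtain rfl := hlm a ha b hb a' ha' b' hb' h
    exact Prod.ext rfl (List.append_cancel_left h)
  have hdisj : (antidiagonal n : Set (ℕ × ℕ)).PairwiseDisjoint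
      fun p => l.slice p.1 ×ˢ m.slice p.2 := by
    rintro p - q - hpq
    refine Set.disjoint_left.2 fun ⟨a, b⟩ hp hq => hpq ?_
    simp only [Set.mem_prod, slice, Set.mem_ofPred_eq] at hp hq
    exact Prod.ext (hp.1.2.symm.trans hq.1.2) (hp.2.2.symm.trans hq.2.2)
  rw [coeff_lengthGF, coeff_mul, slice_mul, hinj.ncard_image,
    Set.Finite.ncard_biUnion (antidiagonal n).finite_toSet
      (fun p _ => (hl p.1).prod (hm p.2)) hdisj, finsum_mem_coe_finset]
  push_cast
  simp only [Set.ncard_prod, Nat.cast_mul, coeff_lengthGF]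

theorem lengthGF_mul_singleton {l : Language α} (hl : l.HasFiniteSlices) (x : List α) :
    lengthGF (l * {x}) = lengthGF l * X ^ x.length := by
  rw [lengthGF_mul hl (hasFiniteSlices_singleton x) fun a _ b hb a' _ b' hb' h => ?_,
    lengthGF_singleton]
  rw [mem_singleton.1 hb, mem_singleton.1 hb'] at h
  exact List.append_cancel_right h

end Language

namespace CatalanWord

open Language

def IsStep (a b : ℕ) : Prop := b ≤ a + 1 ∧ b ≠ a

def hWords (M : ℕ) : Language ℕ :=
  {x | (∀ a ∈ x, 1 ≤ a ∧ a ≤ M) ∧ x.IsChain IsStep ∧ x.getLast? = some M}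

/-- The words counted by `G (M + 1)`. The implicit letter `0` in front forces the first letter
to be `1`, and makes `[]` the only word for `M = 0`, in accordance with `G 1 = 1`. -/
def gWords (M : ℕ) : Language ℕ :=
  {x | (∀ a ∈ x, 1 ≤ a ∧ a ≤ M) ∧ (0 :: x).IsChain IsStep ∧ (0 :: x).getLast? = some M}

theorem mem_hWords {M : ℕ} {x : List ℕ} :
    x ∈ hWords M ↔ (∀ a ∈ x, 1 ≤ a ∧ a ≤ M) ∧ x.IsChain IsStep ∧ x.getLast? = some M :=
  Iff.rfl

theorem mem_gWords {M : ℕ} {x : List ℕ} :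
    x ∈ gWords M ↔
      (∀ a ∈ x, 1 ≤ a ∧ a ≤ M) ∧ (0 :: x).IsChain IsStep ∧ (0 :: x).getLast? = some M :=
  Iff.rfl

theorem H_eq_lengthGF (M : ℕ) : H M = lengthGF (hWords M) := by
  ext n
  rw [H, coeff_mk, coeff_lengthGF, ← ncard_setOf_ofFn_mem]
  congr 3
  ext w
  simp only [mem_hWords, IsStep, List.isChain_ofFn, List.getLast?_ofFn_eq_some,
    List.forall_mem_ofFn_iff]

theorem gWords_zero : gWords 0 = {[]} := by
  ext x
  refine ⟨fun hx => List.eq_nil_iff_forall_not_mem.2 fun a ha => ?_, fun hx => ?_⟩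
  · have := (mem_gWords.1 hx).1 a ha
    omega
  · rw [mem_singleton.1 hx]
    exact ⟨by simp, List.isChain_singleton 0, rfl⟩

theorem G_succ_eq_lengthGF (M : ℕ) : G (M + 1) = lengthGF (gWords M) := by
  rcases Nat.eq_zero_or_pos M with rfl | hM
  · rw [gWords_zero, lengthGF_singleton]
    simp [G]
  ext n
  rw [G, if_neg (by omega), coeff_mk, coeff_lengthGF, ← ncard_setOf_ofFn_mem]
  congr 3
  ext w
  simp only [mem_gWords, IsCatalanWord, IsStep, List.isChain_cons,
    List.isChain_ofFn, List.forall_mem_ofFn_iff, Option.mem_def, List.head?_ofFn_eq_some,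
    Nat.add_sub_cancel, List.getLast?_cons_eq_some_iff_of_ne hM.ne, List.getLast?_ofFn_eq_some]
  constructor
  · rintro ⟨⟨hpos, hfirst, hup⟩, hne, hle, -, hlast⟩
    refine ⟨fun j => ⟨hpos j, hle j⟩, ⟨fun y ⟨h, hy⟩ => ?_, fun i hi => ⟨hup i hi, hne i hi⟩⟩,
      hlast⟩
    rw [← hy, hfirst h]
    simp
  · rintro ⟨hbd, ⟨hfirst, hstep⟩, hlast⟩
    refine ⟨⟨fun i => (hbd i).1, fun h => ?_, fun i hi => (hstep i hi).1⟩,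
      fun i hi => (hstep i hi).2, fun i => (hbd i).2, ⟨_, hlast.2⟩, hlast⟩
    have := hfirst _ ⟨h, rfl⟩
    omega

theorem hasFiniteSlices_hWords (M : ℕ) : (hWords M).HasFiniteSlices :=
  hasFiniteSlices_of_forall_le fun _ hx a ha => ((mem_hWords.1 hx).1 a ha).2

theorem hasFiniteSlices_gWords (M : ℕ) : (gWords M).HasFiniteSlices :=
  hasFiniteSlices_of_forall_le fun _ hx a ha => ((mem_gWords.1 hx).1 a ha).2

theorem getLast?_of_mem_gWords_succ {K : ℕ} {x : List ℕ} (hx : x ∈ gWords (K + 1)) :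
    x.getLast? = some (K + 1) :=
  (List.getLast?_cons_eq_some_iff_of_ne (by omega)).1 (mem_gWords.1 hx).2.2

theorem notMem_of_mem_hWords {K : ℕ} {x : List ℕ} (hx : x ∈ hWords K) : K + 1 ∉ x :=
  fun h => by
    have := ((mem_hWords.1 hx).1 _ h).2
    omega

theorem append_singleton_mem_gWords_succ_iff {K : ℕ} {y : List ℕ} :
    y ++ [K + 1] ∈ gWords (K + 1) ↔
      (∀ a ∈ y, 1 ≤ a ∧ a ≤ K + 1) ∧ (0 :: y).IsChain IsStep ∧ (0 :: y).getLast? = some K := by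
  obtain ⟨c, hc⟩ : ∃ c, (0 :: y).getLast? = some c := ⟨_, List.getLast?_cons⟩
  have hc_mem := List.mem_of_getLast? hc
  simp only [mem_gWords, ← List.cons_append, List.isChain_append, List.forall_mem_append, hc,
    List.mem_singleton, forall_eq, List.isChain_singleton, List.getLast?_append,
    List.getLast?_singleton, Option.some_or, Option.mem_def, List.head?_cons, Option.some.injEq,
    IsStep, forall_eq', true_and, and_true]
  constructor
  · rintro ⟨⟨hy, -⟩, hchain, hstep⟩
    refine ⟨hy, hchain, ?_⟩
    rcases List.mem_cons.1 hc_mem with rfl | hc_mem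
    · omega
    · have := (hy c hc_mem).2
      omega
  · rintro ⟨hy, hchain, rfl⟩
    exact ⟨⟨hy, by omega⟩, hchain, by omega⟩

theorem gWords_succ_le (K : ℕ) :
    gWords (K + 1) ≤ (gWords K + gWords (K + 1) * hWords K) * {[K + 1]} := by
  intro x hx
  obtain ⟨y, rfl⟩ : ∃ y, x = y ++ [K + 1] := by
    obtain ⟨_ | ⟨c, y⟩, hy⟩ := List.getLast?_eq_some_iff.1 (mem_gWords.1 hx).2.2
    · simp at hy
    · exact ⟨y, (List.cons.inj hy).2⟩
  refine mem_mul.2 ⟨y, (mem_add _ _ _).2 ?_, [K + 1], rfl, rfl⟩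
  obtain ⟨hy, hchain, hlast⟩ := append_singleton_mem_gWords_succ_iff.1 hx
  by_cases hK : K + 1 ∈ y
  · obtain ⟨A, B, rfl, hB⟩ := List.exists_eq_append_cons_notMem_right hK
    refine Or.inr (mem_mul.2 ⟨A ++ [K + 1], mem_gWords.2 ⟨fun a ha => ?_,
      hchain.prefix ⟨B, by simp⟩, by simp [List.getLast?_cons]⟩, B, mem_hWords.2
      ⟨fun a ha => ?_, hchain.suffix ⟨0 :: A ++ [K + 1], by simp⟩, ?_⟩, by simp⟩)
    · rcases List.mem_append.1 ha with ha | ha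
      · exact hy a (by simp [ha])
      · simp only [List.mem_singleton] at ha
        omega
    · have : a ≠ K + 1 := fun h => hB (h ▸ ha)
      have := hy a (by simp [ha])
      omega
    · rcases B.eq_nil_or_concat with rfl | ⟨L, b, rfl⟩
      · simp [List.getLast?_cons] at hlast
      · simpa [List.getLast?_cons] using hlast
  · refine Or.inl (mem_gWords.2 ⟨fun a ha => ⟨(hy a ha).1, ?_⟩, hchain, hlast⟩)
    have : a ≠ K + 1 := fun h => hK (h ▸ ha)
    have := (hy a ha).2
    omega

theorem le_gWords_succ (K : ℕ) :
    (gWords K + gWords (K + 1) * hWords K) * {[K + 1]} ≤ gWords (K + 1) := by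
  rintro _ ⟨y, hy | ⟨A, hA, B, hB, rfl⟩, _, rfl, rfl⟩
  · obtain ⟨hy, hchain, hlast⟩ := mem_gWords.1 hy
    exact append_singleton_mem_gWords_succ_iff.2
      ⟨fun a ha => ⟨(hy a ha).1, by have := (hy a ha).2; omega⟩, hchain, hlast⟩
  · obtain ⟨hA_bd, hA_chain, hA_last⟩ := mem_gWords.1 hA
    obtain ⟨hB_bd, hB_chain, hB_last⟩ := mem_hWords.1 hB
    refine append_singleton_mem_gWords_succ_iff.2 ⟨fun a ha => ?_, ?_, ?_⟩
    · rcases List.mem_append.1 ha with ha | ha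
      · exact hA_bd a ha
      · have := hB_bd a ha
        omega
    · rw [← List.cons_append]
      refine hA_chain.append hB_chain fun c hc d hd => ?_
      rw [hA_last, Option.mem_some_iff] at hc
      have := (hB_bd d (List.mem_of_mem_head? hd)).2
      simp only [IsStep, ← hc]
      omega
    · rw [← List.cons_append, List.getLast?_append, hB_last]
      rfl

theorem gWords_succ (K : ℕ) :
    gWords (K + 1) = (gWords K + gWords (K + 1) * hWords K) * {[K + 1]} :=
  le_antisymm (gWords_succ_le K) (le_gWords_succ K)

theorem disjoint_gWords_mul_hWords (K : ℕ) :
    Disjoint (gWords K) (gWords (K + 1) * hWords K) := by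
  refine Set.disjoint_left.2 fun x hx hx' => ?_
  obtain ⟨a, ha, b, -, rfl⟩ := mem_mul.1 hx'
  have := ((mem_gWords.1 hx).1 (K + 1)
    (List.mem_append_left b (List.mem_of_getLast? (getLast?_of_mem_gWords_succ ha)))).2
  omega

theorem lengthGF_gWords_succ (K : ℕ) :
    lengthGF (gWords (K + 1)) =
      (lengthGF (gWords K) + lengthGF (gWords (K + 1)) * lengthGF (hWords K)) * X := by
  have hG := hasFiniteSlices_gWords
  have hH := hasFiniteSlices_hWords
  conv_lhs => rw [gWords_succ]
  rw [lengthGF_mul_singleton ((hG K).add ((hG (K + 1)).mul (hH K))),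
    lengthGF_add (hG K) ((hG (K + 1)).mul (hH K)) (disjoint_gWords_mul_hWords K),
    lengthGF_mul (hG (K + 1)) (hH K) fun a ha b hb a' ha' b' hb' =>
      List.append_inj_left_of_getLast?_eq (getLast?_of_mem_gWords_succ ha)
        (getLast?_of_mem_gWords_succ ha') (notMem_of_mem_hWords hb) (notMem_of_mem_hWords hb'),
    List.length_singleton, pow_one]

end CatalanWord

theorem G_recurrence (m : ℕ) (hm : 2 ≤ m) :
    G m * (1 - PowerSeries.X * H (m - 2)) = PowerSeries.X * G (m - 1) ∧
    G m = PowerSeries.X * G (m - 1) + PowerSeries.X * H (m - 2) * G m := by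
  obtain ⟨K, rfl⟩ : ∃ K, m = K + 2 := ⟨m - 2, by omega⟩
  have key : G (K + 2) = (G (K + 1) + G (K + 2) * H K) * X := by
    rw [CatalanWord.G_succ_eq_lengthGF, CatalanWord.G_succ_eq_lengthGF,
      CatalanWord.H_eq_lengthGF]
    exact CatalanWord.lengthGF_gWords_succ K
  rw [Nat.add_sub_cancel, show K + 2 - 1 = K + 1 by omega]
  constructor <;> linear_combination key
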